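/- Let M be a finite alphabet with |M| = m ≥ 1 and let 0 < λ < 1 be a message-loss probability such that from a channel configuration with k messages, each message is independently lost with probability λ in one step and one new message may be appended. If λ > 1/2 (more generally, if the expected number of lost messages λ·k exceeds 1 for all k ≥ k_0), then the Markov chain on channel lengths with transitions k ↦ (k + 1 − Binomial(k+1, λ)) is positive recurrent and reaches length 0 with probability 1 from every initial length; hence the set of configurations with empty channels is visited with probability 1. -/

import Mathlib

open MeasureTheory

/-- Quantitative essence of Lemma `fattractors`: the Markov chain of channel lengths,
where from length `k` one message is appended and each of the `k + 1` messages is lost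
independently with probability `p > 1/2`, is positive recurrent (finite expected return
time to `0`) and reaches length `0` with probability `1` from every initial length. -/
theorem lcs_channel_length_attractor
    (p : ENNReal) (hp_half : 1 / 2 < p) (hp_one : p < 1)
    (P : ℕ → ℕ → ENNReal)
    (hPdef : ∀ k j : ℕ, j ≤ k + 1 →
      P k j = ((k + 1).choose j : ENNReal) * (1 - p) ^ j * p ^ (k + 1 - j))
    (hPzero : ∀ k j : ℕ, k + 1 < j → P k j = 0)
    (μ : ℕ → Measure (ℕ → ℕ))
    (hprob : ∀ k, IsProbabilityMeasure (μ k))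
    (hrec : ∀ k, μ k =
      Measure.sum fun k' => (P k k') •
        Measure.map (fun ω (n : ℕ) => Nat.casesOn n k fun i => ω i) (μ k')) :
    (∀ k, μ k {ω | ∃ n, ω n = 0} = 1) ∧
    (∀ k, ∫⁻ ω, ((sInf {n : ℕ | 1 ≤ n ∧ ω n = 0} : ℕ) : ENNReal) ∂ (μ k) < ⊤) := by
  -- basic facts about `p` and `q := 1 - p`
  set q : ENNReal := 1 - p with hqdef
  have hptop : p ≠ ⊤ := ne_top_of_lt hp_one
  have hp0 : p ≠ 0 := by
    have : (0 : ENNReal) < p := lt_trans (by norm_num) hp_half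
    exact this.ne'
  have hq0 : q ≠ 0 := by
    rw [hqdef, Ne, tsub_eq_zero_iff_le, not_le]
    exact hp_one
  have hqtop : q ≠ ⊤ := ne_top_of_le_ne_top ENNReal.one_ne_top tsub_le_self
  have hq_half : q ≤ 1 / 2 := by
    have : (1 : ENNReal) - p ≤ 1 - 1 / 2 := tsub_le_tsub_left hp_half.le 1
    have h12 : (1 : ENNReal) - 1 / 2 = 1 / 2 := by
      apply ENNReal.sub_eq_of_eq_add (by norm_num)
      rw [ENNReal.div_add_div_same]
      norm_num
      rw [eq_comm, ENNReal.div_eq_one_iff] <;> norm_num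
    rw [hqdef, ← h12]; exact this
  have h2q : 2 * q ≤ 1 := by
    calc 2 * q ≤ 2 * (1 / 2) := mul_le_mul_right hq_half 2
      _ = 1 := by
          rw [ENNReal.mul_div_cancel (by norm_num) (by norm_num)]
  have hqp : q ≤ p := le_trans hq_half hp_half.le
  have hθtop : p / q ≠ ⊤ := (ENNReal.div_lt_top hptop hq0).ne
  have hθ1 : (1 : ENNReal) ≤ p / q := by
    rw [ENNReal.le_div_iff_mul_le (Or.inl hq0) (Or.inl hqtop), one_mul]
    exact hqp
  have hqθ : q * (p / q) = p := ENNReal.mul_div_cancel hq0 hqtop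
  -- the contraction constant
  have hrtop : 4 * p * q ≠ ⊤ :=
    ENNReal.mul_ne_top (ENNReal.mul_ne_top (by norm_num) hptop) hqtop
  have hr1 : 4 * p * q < 1 := by
    have hpa : p.toReal < 1 := by
      have := (ENNReal.toReal_lt_toReal hptop ENNReal.one_ne_top).mpr hp_one
      simpa using this
    have hpah : 1 / 2 < p.toReal := by
      have := (ENNReal.toReal_lt_toReal (by norm_num) hptop).mpr hp_half
      rw [ENNReal.toReal_div] at this
      simpa using this
    have hqa : q.toReal = 1 - p.toReal := by
      rw [hqdef, ENNReal.toReal_sub_of_le hp_one.le ENNReal.one_ne_top, ENNReal.toReal_one]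
    rw [← ENNReal.toReal_lt_toReal hrtop ENNReal.one_ne_top]
    rw [ENNReal.toReal_mul, ENNReal.toReal_mul, hqa]
    have h4 : ((4 : ENNReal)).toReal = 4 := by simp
    rw [h4, ENNReal.toReal_one]
    have hpos : 0 < 2 * p.toReal - 1 := by linarith
    nlinarith [mul_pos hpos hpos]
  -- measurability helpers
  have hevalset : ∀ (m : ℕ) (s : Set ℕ), MeasurableSet {ω : ℕ → ℕ | ω m ∈ s} :=
    fun m s => (measurable_pi_apply m) (show MeasurableSet s from trivial)
  have mprep : ∀ k : ℕ, Measurable (fun (ω : ℕ → ℕ) (n : ℕ) =>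
      (Nat.casesOn n k fun i => ω i : ℕ)) := by
    intro k
    apply measurable_pi_lambda
    intro n
    cases n with
    | zero => exact measurable_const
    | succ i => exact measurable_pi_apply i
  -- unfolding the recursion on measurable sets
  have hmap : ∀ (k : ℕ) (A : Set (ℕ → ℕ)), MeasurableSet A →
      μ k A = ∑' k', P k k' *
        μ k' ((fun (ω : ℕ → ℕ) (n : ℕ) => (Nat.casesOn n k fun i => ω i : ℕ)) ⁻¹' A) := by
    intro k A hA
    rw [hrec k, Measure.sum_apply _ hA]
    refine tsum_congr fun k' => ?_
    rw [Measure.smul_apply, Measure.map_apply (mprep k) hA, smul_eq_mul]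
  -- the first coordinate is a.s. the starting point
  have hzero : ∀ k : ℕ, μ k {ω : ℕ → ℕ | ω 0 ≠ k} = 0 := by
    intro k
    have hpre : (fun (ω : ℕ → ℕ) (n : ℕ) => (Nat.casesOn n k fun i => ω i : ℕ)) ⁻¹'
        {ω : ℕ → ℕ | ω 0 ≠ k} = ∅ := by
      ext ω; simp
    rw [hmap k {ω : ℕ → ℕ | ω 0 ≠ k} (hevalset 0 {v | v ≠ k}), hpre]
    simp
  -- the key events: no zero among times 1..n
  set B : ℕ → Set (ℕ → ℕ) := fun n => {ω | ∀ m, 1 ≤ m → m ≤ n → ω m ≠ 0} with hBdef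
  have hB : ∀ n, MeasurableSet (B n) := by
    intro n
    have : B n = ⋂ m : ℕ, {ω : ℕ → ℕ | ω m ∈ {v | 1 ≤ m → m ≤ n → v ≠ 0}} := by
      ext ω; simp [hBdef]
    rw [this]
    exact MeasurableSet.iInter fun m => hevalset m _
  -- the recursion for the events B
  have Brec : ∀ (k n : ℕ), μ k (B (n + 1)) =
      ∑' k', P k k' * (if k' = 0 then 0 else μ k' (B n)) := by
    intro k n
    rw [hmap k _ (hB (n + 1))]
    refine tsum_congr fun k' => ?_
    congr 1
    have hpre : (fun (ω : ℕ → ℕ) (m : ℕ) => (Nat.casesOn m k fun i => ω i : ℕ)) ⁻¹'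
        (B (n + 1)) = {ω : ℕ → ℕ | ω 0 ≠ 0} ∩ B n := by
      ext ω
      simp only [Set.mem_preimage, hBdef, Set.mem_setOf_eq, Set.mem_inter_iff]
      constructor
      · intro h
        refine ⟨h 1 le_rfl (by omega), fun m h1 h2 => ?_⟩
        exact h (m + 1) (by omega) (by omega)
      · rintro ⟨h0, h⟩ m h1 h2
        match m, h1 with
        | (i + 1), _ =>
          show ω i ≠ 0
          cases i with
          | zero => exact h0
          | succ i0 => exact h (i0 + 1) (by omega) (by omega)
    rw [hpre]
    by_cases hk' : k' = 0
    · subst hk'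
      rw [if_pos rfl]
      refine measure_mono_null ?_ (hzero 0)
      intro ω hω; exact hω.1
    · rw [if_neg hk']
      apply le_antisymm
      · exact measure_mono Set.inter_subset_right
      · calc μ k' (B n)
            ≤ μ k' (({ω : ℕ → ℕ | ω 0 ≠ 0} ∩ B n) ∪ {ω : ℕ → ℕ | ω 0 ≠ k'}) := by
              refine measure_mono fun ω hω => ?_
              by_cases h0 : ω 0 = k'
              · exact Or.inl ⟨fun hc => hk' (h0.symm.trans hc), hω⟩
              · exact Or.inr h0
          _ ≤ μ k' ({ω : ℕ → ℕ | ω 0 ≠ 0} ∩ B n) + μ k' {ω : ℕ → ℕ | ω 0 ≠ k'} :=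
              measure_union_le _ _
          _ = μ k' ({ω : ℕ → ℕ | ω 0 ≠ 0} ∩ B n) := by rw [hzero k', add_zero]
  -- the weighted binomial sum
  have hsum : ∀ (x : ENNReal) (k : ℕ), ∑' j, P k j * x ^ j = (q * x + p) ^ (k + 1) := by
    intro x k
    rw [tsum_eq_sum (s := Finset.range (k + 2)) (fun j hj => by
      have hj' : k + 1 < j := by
        simp only [Finset.mem_range] at hj; omega
      rw [hPzero k j hj', zero_mul])]
    rw [add_pow]
    refine Finset.sum_congr rfl fun j hj => ?_
    have hj' : j ≤ k + 1 := by
      simp only [Finset.mem_range] at hj; omega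
    rw [hPdef k j hj', mul_pow]
    ring
  -- the key drift inequality
  have key : ∀ k : ℕ, 1 ≤ k → (2 * p) ^ (k + 1) ≤ (4 * p * q) * (p / q) ^ k := by
    intro k hk
    obtain ⟨j, rfl⟩ : ∃ j, k = j + 1 := ⟨k - 1, by omega⟩
    rw [← ENNReal.mul_le_mul_iff_left (c := q ^ (j + 1)) (pow_ne_zero (j + 1) hq0)
      (ENNReal.pow_ne_top hqtop)]
    have hrhs : (4 * p * q) * (p / q) ^ (j + 1) * q ^ (j + 1) = 4 * p * q * p ^ (j + 1) := by
      rw [mul_assoc, ← mul_pow, ENNReal.div_mul_cancel hq0 hqtop]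
    rw [hrhs]
    calc (2 * p) ^ (j + 1 + 1) * q ^ (j + 1)
        = (4 * p * q * p ^ (j + 1)) * (2 * q) ^ j := by ring
      _ ≤ (4 * p * q * p ^ (j + 1)) * 1 := mul_le_mul_right (pow_le_one' h2q j) _
      _ = 4 * p * q * p ^ (j + 1) := mul_one _
  -- the Lyapunov bound
  have claim1 : ∀ (n k : ℕ), 1 ≤ k → μ k (B n) ≤ (4 * p * q) ^ n * (p / q) ^ k := by
    intro n
    induction n with
    | zero =>
      intro k hk
      haveI := hprob k
      rw [pow_zero, one_mul]
      exact le_trans prob_le_one (one_le_pow_of_one_le' hθ1 k)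
    | succ n ih =>
      intro k hk
      rw [Brec k n]
      calc ∑' k', P k k' * (if k' = 0 then 0 else μ k' (B n))
          ≤ ∑' k', P k k' * ((4 * p * q) ^ n * (p / q) ^ k') := by
            refine ENNReal.tsum_le_tsum fun k' => mul_le_mul_right ?_ _
            by_cases h : k' = 0
            · simp [h]
            · rw [if_neg h]; exact ih k' (by omega)
        _ = (4 * p * q) ^ n * ∑' k', P k k' * (p / q) ^ k' := by
            rw [← ENNReal.tsum_mul_left]
            exact tsum_congr fun k' => by ring
        _ = (4 * p * q) ^ n * (2 * p) ^ (k + 1) := by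
            rw [hsum (p / q) k, hqθ, two_mul]
        _ ≤ (4 * p * q) ^ n * ((4 * p * q) * (p / q) ^ k) := mul_le_mul_right (key k hk) _
        _ = (4 * p * q) ^ (n + 1) * (p / q) ^ k := by ring
  -- the uniform bound used for the expected return time
  have claim2 : ∀ (n k : ℕ), μ k (B (n + 1)) ≤ (2 * p) ^ (k + 1) * (4 * p * q) ^ n := by
    intro n k
    rw [Brec k n]
    calc ∑' k', P k k' * (if k' = 0 then 0 else μ k' (B n))
        ≤ ∑' k', P k k' * ((4 * p * q) ^ n * (p / q) ^ k') := by
          refine ENNReal.tsum_le_tsum fun k' => mul_le_mul_right ?_ _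
          by_cases h : k' = 0
          · simp [h]
          · rw [if_neg h]; exact claim1 n k' (by omega)
      _ = (4 * p * q) ^ n * ∑' k', P k k' * (p / q) ^ k' := by
          rw [← ENNReal.tsum_mul_left]
          exact tsum_congr fun k' => by ring
      _ = (4 * p * q) ^ n * (2 * p) ^ (k + 1) := by
          rw [hsum (p / q) k, hqθ, two_mul]
      _ = (2 * p) ^ (k + 1) * (4 * p * q) ^ n := mul_comm _ _
  constructor
  · -- reaching 0 with probability one
    intro k
    haveI := hprob k
    have hcompl : μ k {ω : ℕ → ℕ | ∃ n, ω n = 0}ᶜ = 0 := by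
      rcases Nat.eq_zero_or_pos k with hk | hk
      · subst hk
        refine measure_mono_null ?_ (hzero 0)
        intro ω hω
        exact fun h => hω ⟨0, h⟩
      · have hb : ∀ n, μ k {ω : ℕ → ℕ | ∃ n, ω n = 0}ᶜ ≤ (4 * p * q) ^ n * (p / q) ^ k := by
          intro n
          refine le_trans (measure_mono ?_) (claim1 n k hk)
          intro ω hω m _ _
          exact fun h => hω ⟨m, h⟩
        have htend : Filter.Tendsto (fun n => (4 * p * q) ^ n * (p / q) ^ k)
            Filter.atTop (nhds 0) := by
          have := ENNReal.Tendsto.mul_const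
            (ENNReal.tendsto_pow_atTop_nhds_zero_of_lt_one hr1)
            (Or.inr (ENNReal.pow_ne_top hθtop (n := k)))
          simpa using this
        exact le_antisymm (ge_of_tendsto' htend hb) zero_le
    have hone : (1 : ENNReal) ≤ μ k {ω : ℕ → ℕ | ∃ n, ω n = 0} := by
      calc (1 : ENNReal) = μ k Set.univ := measure_univ.symm
        _ = μ k ({ω : ℕ → ℕ | ∃ n, ω n = 0} ∪ {ω : ℕ → ℕ | ∃ n, ω n = 0}ᶜ) := by
            rw [Set.union_compl_self]
        _ ≤ μ k {ω : ℕ → ℕ | ∃ n, ω n = 0} + μ k {ω : ℕ → ℕ | ∃ n, ω n = 0}ᶜ :=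
            measure_union_le _ _
        _ = μ k {ω : ℕ → ℕ | ∃ n, ω n = 0} := by rw [hcompl, add_zero]
    exact le_antisymm prob_le_one hone
  · -- finite expected return time
    intro k
    haveI := hprob k
    have hiff : ∀ (n : ℕ) (ω : ℕ → ℕ), n < sInf {m | 1 ≤ m ∧ ω m = 0} ↔
        ((∃ j, 1 ≤ j ∧ ω j = 0) ∧ ∀ m, 1 ≤ m → ω m = 0 → n < m) := by
      intro n ω
      constructor
      · intro h
        have hne : {m | 1 ≤ m ∧ ω m = 0}.Nonempty := by
          by_contra hemp
          rw [Set.not_nonempty_iff_eq_empty] at hemp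
          rw [hemp, Nat.sInf_empty] at h
          omega
        exact ⟨hne, fun m h1 h2 => lt_of_lt_of_le h (Nat.sInf_le ⟨h1, h2⟩)⟩
      · rintro ⟨⟨j, hj⟩, hall⟩
        have hmem := Nat.sInf_mem (⟨j, hj⟩ : Set.Nonempty {m | 1 ≤ m ∧ ω m = 0})
        exact hall _ hmem.1 hmem.2
    have hS : ∀ n : ℕ, MeasurableSet {ω : ℕ → ℕ | n < sInf {m | 1 ≤ m ∧ ω m = 0}} := by
      intro n
      have hset : {ω : ℕ → ℕ | n < sInf {m | 1 ≤ m ∧ ω m = 0}} =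
          (⋃ j : ℕ, {ω : ℕ → ℕ | ω j ∈ {v | 1 ≤ j ∧ v = 0}}) ∩
            ⋂ m : ℕ, {ω : ℕ → ℕ | ω m ∈ {v | 1 ≤ m → v = 0 → n < m}} := by
        ext ω
        simp only [Set.mem_setOf_eq, Set.mem_inter_iff, Set.mem_iUnion, Set.mem_iInter]
        rw [hiff n ω]
      rw [hset]
      exact (MeasurableSet.iUnion fun j => hevalset j _).inter
        (MeasurableSet.iInter fun m => hevalset m _)
    have hSB : ∀ n : ℕ, {ω : ℕ → ℕ | n < sInf {m | 1 ≤ m ∧ ω m = 0}} ⊆ B n := by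
      intro n ω hω m h1 h2
      obtain ⟨-, hall⟩ := (hiff n ω).mp hω
      intro h0
      exact absurd (hall m h1 h0) (by omega)
    have hcast : ∀ m : ℕ, (m : ENNReal) = ∑' n : ℕ, if n < m then 1 else 0 := by
      intro m
      rw [tsum_eq_sum (s := Finset.range m) (fun n hn => by
        rw [if_neg]
        simpa using fun h => hn (Finset.mem_range.mpr h))]
      rw [Finset.sum_congr rfl (fun n hn => if_pos (Finset.mem_range.mp hn))]
      simp
    calc ∫⁻ ω, ((sInf {n : ℕ | 1 ≤ n ∧ ω n = 0} : ℕ) : ENNReal) ∂ (μ k)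
        = ∫⁻ ω, ∑' n : ℕ,
            Set.indicator {ω' : ℕ → ℕ | n < sInf {m | 1 ≤ m ∧ ω' m = 0}} 1 ω ∂ (μ k) := by
          refine lintegral_congr fun ω => ?_
          rw [hcast]
          refine tsum_congr fun n => ?_
          rw [Set.indicator_apply]
          rfl
      _ = ∑' n : ℕ, ∫⁻ ω,
            Set.indicator {ω' : ℕ → ℕ | n < sInf {m | 1 ≤ m ∧ ω' m = 0}} 1 ω ∂ (μ k) :=
          lintegral_tsum fun n => (measurable_one.indicator (hS n)).aemeasurable
      _ = ∑' n : ℕ, μ k {ω' : ℕ → ℕ | n < sInf {m | 1 ≤ m ∧ ω' m = 0}} :=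
          tsum_congr fun n => lintegral_indicator_one (hS n)
      _ ≤ ∑' n : ℕ, μ k (B n) := ENNReal.tsum_le_tsum fun n => measure_mono (hSB n)
      _ = μ k (B 0) + ∑' n : ℕ, μ k (B (n + 1)) := tsum_eq_zero_add' ENNReal.summable
      _ ≤ 1 + ∑' n : ℕ, (2 * p) ^ (k + 1) * (4 * p * q) ^ n :=
          add_le_add prob_le_one (ENNReal.tsum_le_tsum fun n => claim2 n k)
      _ = 1 + (2 * p) ^ (k + 1) * (1 - 4 * p * q)⁻¹ := by
          rw [ENNReal.tsum_mul_left, ENNReal.tsum_geometric]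
      _ < ⊤ := by
          refine ENNReal.add_lt_top.mpr ⟨ENNReal.one_lt_top, ?_⟩
          refine ENNReal.mul_lt_top ?_ ?_
          · exact ENNReal.pow_lt_top
              (ENNReal.mul_lt_top (by norm_num) hptop.lt_top)
          · rw [ENNReal.inv_lt_top]
            exact tsub_pos_of_lt hr1
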